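/- arXiv:1702.03608 — 2 statements merged into one kernel-verified Lean document; each statement's English description precedes it below -/
import Mathlib

section
/- Every monic differential polynomial f ∈ O{x, δ₁} admits a factorisation f = (x − Λ) h with Λ ∈ O and h ∈ O{x, δ₁}. -/
set_option maxHeartbeats 1000000
set_option synthInstance.maxHeartbeats 1000000

noncomputable section

/-- `K = ℂ((t))`, the field of formal Laurent series. -/
abbrev K : Type := LaurentSeries ℂ

/-- The derivation `d = t * d/dt` on `K`, acting on coefficients by `cₙ ↦ n * cₙ`. -/
def dd : K →ₗ[ℂ] K where
  toFun f :=
    { coeff := fun n => (n : ℂ) * f.coeff n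
      isPWO_support' := f.isPWO_support'.mono (fun n hn => by
        simp only [Function.mem_support, ne_eq] at hn ⊢
        exact fun h => hn (by rw [h, mul_zero])) }
  map_add' f g := by
    ext n
    simp [mul_add]
  map_smul' c f := by
    ext n
    simp [HahnSeries.coeff_smul]
    ring

/-- Multiplication by `a ∈ K` as a `ℂ`-linear endomorphism of `K`. -/
def mulOp (a : K) : Module.End ℂ K where
  toFun f := a * f
  map_add' := mul_add a
  map_smul' c f := by
    simp only [RingHom.id_apply]
    rw [← HahnSeries.single_zero_mul_eq_smul, ← HahnSeries.single_zero_mul_eq_smul]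
    ring

/-- `d = t d/dt` as an endomorphism. -/
def ddE : Module.End ℂ K := dd

/-- The element `t ∈ K`. -/
def tK : K := HahnSeries.single (1 : ℤ) (1 : ℂ)

/-- The element `t^i ∈ K` for `i : ℤ`. -/
def tpow (i : ℤ) : K := HahnSeries.single i (1 : ℂ)

/-- The operator corresponding to the variable `x` of the twisted polynomial ring
`K{x, δ_m}`, i.e. the derivation `δ_m = t^m d/dt = t^(m-1) ⬝ (t d/dt)`. -/
def Xop (m : ℕ) : Module.End ℂ K := mulOp (tK ^ (m - 1)) * ddE

/-- The inclusion `O = ℂ[[t]] → K`. -/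
def ofPS : PowerSeries ℂ →+* K := HahnSeries.ofPowerSeries ℤ ℂ

/-- The operator attached to a twisted polynomial `Σ_{i ≤ n} a_i x^i` with
coefficients `a_i ∈ O = ℂ[[t]]`, in `K{x, δ_m}`. -/
def opO (m n : ℕ) (a : ℕ → PowerSeries ℂ) : Module.End ℂ K :=
  ∑ i ∈ Finset.range (n + 1), mulOp (ofPS (a i)) * (Xop m) ^ i

/-- Reduction mod `t` of a twisted polynomial with coefficients in `O`. -/
def red (n : ℕ) (a : ℕ → PowerSeries ℂ) : Polynomial ℂ :=
  ∑ i ∈ Finset.range (n + 1), Polynomial.C (PowerSeries.constantCoeff (R := ℂ) (a i)) * Polynomial.X ^ i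

/-- The embedding `K → K`, `t ↦ t^q`, realising `K` as the subfield `ℂ((s^q)) ⊆ ℂ((s))`. -/
def embHom (q : ℕ) (hq : 0 < q) : K →+* K :=
  HahnSeries.embDomainRingHom (AddMonoidHom.mk' (fun n => (q : ℤ) * n) (by intro a b; ring))
    (fun a b h => by
      simpa using mul_left_cancel₀ (by exact_mod_cast hq.ne' : (q : ℤ) ≠ 0) h)
    (fun a b => by
      constructor
      · intro h; exact le_of_mul_le_mul_left h (by exact_mod_cast hq)
      · intro h; exact mul_le_mul_of_nonneg_left h (by positivity))

/-!
Write `f = ∑ⱼ tʲ fⱼ` with `fⱼ ∈ ℂ[x]` of degree `≤ n` and look for `Λ = ∑ⱼ λⱼ tʲ`, `h = ∑ⱼ tʲ hⱼ`.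
Since `x tʲ = tʲ (x + j)`, the `tʲ`-coefficient of `(x - Λ) h` is `(x + j) hⱼ - ∑_{k+l=j} λₖ hₗ`,
so we must solve `fⱼ = (x + j - λ₀) hⱼ - ∑_{k=1}^{j} λₖ h_{j-k}` for all `j`. Take for `λ₀` a root
of the monic polynomial `f₀` of least real part and `h₀ = f₀ / (x - λ₀)`. For `j ≥ 1`, `λ₀ - j` is
not a root of `f₀`, so `h₀(λ₀ - j) ≠ 0`: there is a unique `λⱼ` making the known part
`fⱼ + ∑_{0<k<j} λₖ h_{j-k} + λⱼ h₀` vanish at `λ₀ - j`, and `hⱼ` is the quotient by `x - (λ₀ - j)`.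
-/

open Polynomial Finset

theorem dd_coeff (f : K) (m : ℤ) : (dd f).coeff m = (m : ℂ) * f.coeff m := rfl

theorem support_dd_subset (f : K) : (dd f).support ⊆ f.support := fun m hm h =>
  hm (by rw [dd_coeff, h, mul_zero])

theorem dd_mul (f g : K) : dd (f * g) = dd f * g + f * dd g := by
  ext m
  rw [HahnSeries.coeff_add, dd_coeff,
    HahnSeries.coeff_mul_left' f.isPWO_support (support_dd_subset f),
    HahnSeries.coeff_mul_right' g.isPWO_support (support_dd_subset g),
    HahnSeries.coeff_mul, ← Finset.sum_add_distrib, Finset.mul_sum]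
  refine Finset.sum_congr rfl fun ij hij => ?_
  rw [Finset.mem_antidiagonal] at hij
  rw [dd_coeff, dd_coeff, ← hij.2.2]
  push_cast
  ring

theorem mulOp_zero : mulOp 0 = 0 := LinearMap.ext zero_mul

theorem mulOp_one : mulOp 1 = 1 := LinearMap.ext one_mul

theorem mulOp_mul (a b : K) : mulOp (a * b) = mulOp a * mulOp b := LinearMap.ext (mul_assoc a b)

theorem mulOp_add (a b : K) : mulOp (a + b) = mulOp a + mulOp b := LinearMap.ext (add_mul a b)

theorem mulOp_sub (a b : K) : mulOp (a - b) = mulOp a - mulOp b := LinearMap.ext (sub_mul a b)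

theorem ddE_mul_mulOp (a : K) : ddE * mulOp a = mulOp a * ddE + mulOp (dd a) := by
  ext f
  simp only [Module.End.mul_apply, LinearMap.add_apply, mulOp, ddE, LinearMap.coe_mk,
    AddHom.coe_mk, dd_mul, add_comm]

theorem Xop_one : Xop 1 = ddE := by
  rw [Xop, Nat.sub_self, pow_zero, mulOp_one, one_mul]

def eulerDeriv (f : PowerSeries ℂ) : PowerSeries ℂ :=
  PowerSeries.mk fun k => (k : ℂ) * PowerSeries.coeff k f

theorem ofPS_eulerDeriv (f : PowerSeries ℂ) : ofPS (eulerDeriv f) = dd (ofPS f) := by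
  ext m
  rw [dd_coeff]
  change ((eulerDeriv f : PowerSeries ℂ) : K).coeff m = m * (f : K).coeff m
  rw [PowerSeries.coeff_coe, PowerSeries.coeff_coe]
  split_ifs with hm
  · rw [mul_zero]
  · rw [eulerDeriv, PowerSeries.coeff_mk, Nat.cast_natAbs, abs_of_nonneg (not_lt.1 hm)]

-- The coefficients of `(x - Λ) * ∑ cᵢ xⁱ`, using `x c = c x + δ₁ c`.
def xSubMulCoeff (Λ : PowerSeries ℂ) (c : ℕ → PowerSeries ℂ) : ℕ → PowerSeries ℂ
  | 0 => eulerDeriv (c 0) - Λ * c 0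
  | i + 1 => c i + (eulerDeriv (c (i + 1)) - Λ * c (i + 1))

theorem xSub_mul_opO (Λ : PowerSeries ℂ) (c : ℕ → PowerSeries ℂ) (m : ℕ) (hc : c (m + 1) = 0) :
    (Xop 1 - mulOp (ofPS Λ)) * opO 1 m c = opO 1 (m + 1) (xSubMulCoeff Λ c) := by
  set b := fun i => eulerDeriv (c i) - Λ * c i
  have hterm : ∀ i, (ddE - mulOp (ofPS Λ)) * (mulOp (ofPS (c i)) * ddE ^ i) =
      mulOp (ofPS (c i)) * ddE ^ (i + 1) + mulOp (ofPS (b i)) * ddE ^ i := fun i => by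
    rw [sub_mul ddE, ← mul_assoc, ← mul_assoc, ddE_mul_mulOp, ← mulOp_mul, ← map_mul,
      ← ofPS_eulerDeriv, map_sub, mulOp_sub, add_mul, mul_assoc, ← pow_succ', sub_mul (mulOp _)]
    abel
  have hb : b (m + 1) = 0 := by
    ext k
    simp [b, hc, eulerDeriv]
  have hbsum : ∑ i ∈ Finset.range (m + 1), mulOp (ofPS (b i)) * ddE ^ i =
      ∑ i ∈ Finset.range (m + 1), mulOp (ofPS (b (i + 1))) * ddE ^ (i + 1) +
        mulOp (ofPS (b 0)) * ddE ^ 0 := by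
    have h := Finset.sum_range_succ (fun i => mulOp (ofPS (b i)) * ddE ^ i) (m + 1)
    rw [hb, map_zero, mulOp_zero, zero_mul, add_zero] at h
    rw [← h, Finset.sum_range_succ']
  rw [opO, opO, Xop_one, Finset.mul_sum, Finset.sum_congr rfl fun i _ => hterm i,
    Finset.sum_add_distrib, hbsum, Finset.sum_range_succ' _ (m + 1)]
  simp only [xSubMulCoeff, map_add, mulOp_add, add_mul, Finset.sum_add_distrib, b]
  abel

section XSubFactor

variable {F : Type*} [Field F] (f : ℕ → F[X]) (z : F)

-- `(λⱼ, hⱼ)` of the header; at index `j + 1` the sum over `Fin j` is `∑_{k=1}^{j} λₖ h_{j+1-k}`.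
def xSubFactorCoeff : ℕ → F × F[X]
  | 0 => (z, f 0 /ₘ (X - C z))
  | j + 1 =>
    let G := f (j + 1) + ∑ l : Fin j, C (xSubFactorCoeff (l + 1)).1 * (xSubFactorCoeff (j - l)).2
    let w := z - (j + 1 : ℕ)
    let μ := -G.eval w / (f 0 /ₘ (X - C z)).eval w
    (μ, (G + C μ * (f 0 /ₘ (X - C z))) /ₘ (X - C w))
decreasing_by all_goals omega

theorem xSubFactorCoeff_zero : xSubFactorCoeff f z 0 = (z, f 0 /ₘ (X - C z)) := by
  rw [xSubFactorCoeff]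

theorem natDegree_xSubFactorCoeff_le {n : ℕ} (hf : ∀ j, (f j).natDegree ≤ n) (j : ℕ) :
    (xSubFactorCoeff f z j).2.natDegree ≤ n - 1 := by
  induction j using Nat.strong_induction_on with
  | _ j ih =>
  have hq₀ : (f 0 /ₘ (X - C z)).natDegree ≤ n - 1 := by
    rw [natDegree_divByMonic _ (monic_X_sub_C z), natDegree_X_sub_C]
    exact Nat.sub_le_sub_right (hf 0) 1
  cases j with
  | zero => rwa [xSubFactorCoeff_zero]
  | succ j =>
    rw [xSubFactorCoeff, natDegree_divByMonic _ (monic_X_sub_C _), natDegree_X_sub_C]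
    refine Nat.sub_le_sub_right ?_ 1
    refine natDegree_add_le_of_degree_le (natDegree_add_le_of_degree_le (hf _)
      (natDegree_sum_le_of_forall_le _ _ fun l _ => ?_)) ?_
    · exact (natDegree_C_mul_le _ _).trans ((ih _ (by omega)).trans (Nat.sub_le n 1))
    · exact (natDegree_C_mul_le _ _).trans (hq₀.trans (Nat.sub_le n 1))

theorem xSubFactorCoeff_spec (hz : (f 0).IsRoot z)
    (hzk : ∀ k : ℕ, 0 < k → ¬(f 0).IsRoot (z - k)) (j : ℕ) :
    f j = (X + C (j : F)) * (xSubFactorCoeff f z j).2 -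
      ∑ p ∈ antidiagonal j, C (xSubFactorCoeff f z p.1).1 * (xSubFactorCoeff f z p.2).2 := by
  have hf₀ := (mul_divByMonic_eq_iff_isRoot (p := f 0)).2 hz
  cases j with
  | zero =>
    simp only [Finset.Nat.antidiagonal_zero, Finset.sum_singleton, xSubFactorCoeff_zero]
    rw [Nat.cast_zero, map_zero, add_zero, ← sub_mul, hf₀]
  | succ j =>
    set q₀ := f 0 /ₘ (X - C z)
    set w : F := z - (j + 1 : ℕ)
    set G := f (j + 1) +
      ∑ l : Fin j, C (xSubFactorCoeff f z (l + 1)).1 * (xSubFactorCoeff f z (j - l)).2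
    have hq₀w : q₀.eval w ≠ 0 := fun h => hzk (j + 1) j.succ_pos <| by
      rw [IsRoot, ← hf₀, eval_mul, h, mul_zero]
    have hsplit : ∑ p ∈ antidiagonal (j + 1),
        C (xSubFactorCoeff f z p.1).1 * (xSubFactorCoeff f z p.2).2 =
        C z * (xSubFactorCoeff f z (j + 1)).2 + (G - f (j + 1)) +
          C (xSubFactorCoeff f z (j + 1)).1 * q₀ := by
      rw [Finset.Nat.sum_antidiagonal_succ, Finset.Nat.sum_antidiagonal_eq_sum_range_succ
        (fun a b => C (xSubFactorCoeff f z (a + 1)).1 * (xSubFactorCoeff f z b).2),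
        Finset.sum_range_succ, Nat.sub_self, ← Fin.sum_univ_eq_sum_range]
      rw [xSubFactorCoeff_zero]
      simp only [G, q₀]
      ring
    have hroot : (G + C (-G.eval w / q₀.eval w) * q₀).IsRoot w := by
      simp only [IsRoot, eval_add, eval_mul, eval_C]
      field_simp
      ring
    have hdiv := (mul_divByMonic_eq_iff_isRoot).2 hroot
    have hD : xSubFactorCoeff f z (j + 1) =
        (-G.eval w / q₀.eval w, (G + C (-G.eval w / q₀.eval w) * q₀) /ₘ (X - C w)) := by
      rw [xSubFactorCoeff]
    rw [hsplit, hD]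
    simp only [w, map_sub, map_natCast] at hdiv ⊢
    linear_combination -hdiv

end XSubFactor

theorem mk_coeff_eq_xSubMulCoeff (f h : ℕ → ℂ[X]) (μ : ℕ → ℂ)
    (hfh : ∀ j, f j = (X + C (j : ℂ)) * h j - ∑ p ∈ antidiagonal j, C (μ p.1) * h p.2) (i : ℕ) :
    PowerSeries.mk (fun j => (f j).coeff i) =
      xSubMulCoeff (PowerSeries.mk μ) (fun i => PowerSeries.mk fun j => (h j).coeff i) i := by
  ext j
  rw [PowerSeries.coeff_mk, hfh j]
  cases i <;> simp [xSubMulCoeff, eulerDeriv, PowerSeries.coeff_mul, add_mul, coeff_X_mul,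
    add_sub_assoc]

-- `fⱼ`, the coefficient of `tʲ` in `∑_{i ≤ n} aᵢ xⁱ`.
def coeffSlice (n : ℕ) (a : ℕ → PowerSeries ℂ) (j : ℕ) : ℂ[X] :=
  ∑ i ∈ Finset.range (n + 1), C (PowerSeries.coeff j (a i)) * X ^ i

theorem coeff_coeffSlice {n i : ℕ} (hi : i ≤ n) (a : ℕ → PowerSeries ℂ) (j : ℕ) :
    (coeffSlice n a j).coeff i = PowerSeries.coeff j (a i) := by
  simp [coeffSlice, Nat.lt_succ_of_le hi]

theorem natDegree_coeffSlice_le (n : ℕ) (a : ℕ → PowerSeries ℂ) (j : ℕ) :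
    (coeffSlice n a j).natDegree ≤ n :=
  natDegree_sum_le_of_forall_le _ _ fun _ hi =>
    (natDegree_C_mul_X_pow_le _ _).trans (Nat.lt_succ_iff.1 (Finset.mem_range.1 hi))

theorem Polynomial.exists_isRoot_forall_not_isRoot_sub_natCast {P : ℂ[X]} (hP : 0 < P.degree) :
    ∃ z, P.IsRoot z ∧ ∀ k : ℕ, 0 < k → ¬P.IsRoot (z - k) := by
  have hP₀ : P ≠ 0 := ne_zero_of_degree_gt hP
  obtain ⟨z₀, hz₀⟩ := Complex.exists_root hP
  obtain ⟨z, hz, hmin⟩ := P.roots.toFinset.exists_min_image Complex.re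
    ⟨z₀, by simpa [hP₀] using hz₀⟩
  refine ⟨z, by simpa [hP₀] using hz, fun k hk hzk => ?_⟩
  have := hmin (z - k) (by simpa [hP₀] using hzk)
  simp only [Complex.sub_re, Complex.natCast_re] at this
  linarith [(Nat.one_le_cast (α := ℝ)).2 hk]

theorem exists_xSubMulCoeff_eq {n : ℕ} (hn : 1 ≤ n) {a : ℕ → PowerSeries ℂ} (hmonic : a n = 1) :
    ∃ (Λ : PowerSeries ℂ) (c : ℕ → PowerSeries ℂ),
      c n = 0 ∧ ∀ i ≤ n, xSubMulCoeff Λ c i = a i := by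
  have hdeg : 0 < (coeffSlice n a 0).degree := by
    refine lt_of_lt_of_le (by exact_mod_cast hn) (le_degree_of_ne_zero (n := n) ?_)
    simp [coeff_coeffSlice le_rfl, hmonic]
  obtain ⟨z, hz, hzk⟩ := exists_isRoot_forall_not_isRoot_sub_natCast hdeg
  refine ⟨_, _, ?_, fun i hi => (mk_coeff_eq_xSubMulCoeff (coeffSlice n a)
    (fun j => (xSubFactorCoeff (coeffSlice n a) z j).2)
    (fun j => (xSubFactorCoeff (coeffSlice n a) z j).1)
    (xSubFactorCoeff_spec (coeffSlice n a) z hz hzk) i).symm.trans ?_⟩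
  · ext j
    rw [PowerSeries.coeff_mk, map_zero, coeff_eq_zero_of_natDegree_lt]
    exact (natDegree_xSubFactorCoeff_le _ z (natDegree_coeffSlice_le n a) j).trans_lt (by omega)
  · ext j
    rw [PowerSeries.coeff_mk, coeff_coeffSlice hi]

/-- Every monic differential polynomial `f ∈ O{x, δ₁}` (of degree `n ≥ 1`) factors as
`(x - Λ) h` with `Λ ∈ O` and `h ∈ O{x, δ₁}`. -/
theorem stmt_6 (n : ℕ) (hn : 1 ≤ n) (a : ℕ → PowerSeries ℂ) (hmonic : a n = 1) :
    ∃ (Λ : PowerSeries ℂ) (c : ℕ → PowerSeries ℂ),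
      opO 1 n a = (Xop 1 - mulOp (ofPS Λ)) * opO 1 (n - 1) c := by
  obtain ⟨Λ, c, hc, ha⟩ := exists_xSubMulCoeff_eq hn hmonic
  refine ⟨Λ, c, ?_⟩
  rw [xSub_mul_opO Λ c (n - 1) (by rwa [Nat.sub_add_cancel hn]), Nat.sub_add_cancel hn]
  exact Finset.sum_congr rfl fun i hi => by rw [ha i (Finset.mem_range_succ_iff.1 hi)]
end
end

section
/- Let f(x) = Σ_{i=0}^n a_i x^{n-i} ∈ K{x, δ₁} be monic (a₀ = 1) with n ≥ 1, and set r = min_i { v(a_i)/i } (over i with a_i ≠ 0). Write r = p/q in lowest terms with q > 0 and suppose r < 0. Then, after the base change to ℂ((s)) with s = t^{1/q} and substitution x = s^p X, the polynomial g(X) = s^{−np} f(s^p X) is a monic twisted polynomial of degree n in X with coefficients in ℂ[[s]], for the derivation (1/q) s^{1−p} d/ds. -/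
set_option maxHeartbeats 1000000
set_option synthInstance.maxHeartbeats 1000000

noncomputable section

/-!
Put `D = (1/q) s d/ds`, `u = s^p` and `X = u⁻¹ D`. Then `D u = u D + (p/q) u`, and the
computation that gives `(t d/dt)^j = ∑ S(j, k) t^k (d/dt)^k` expresses
`D^j = ∑_k S(j, k) (p/q)^(j-k) u^k X^k` with the Stirling numbers of the second kind. Hence
the coefficient of `X^k` in `s^(-np) f` is `∑_j S(j, k) (p/q)^(j-k) s^((k-n)p) c_j`. Minimality
of the slope `p/q` gives `v_s(c_j) = q v(c_j) ≥ (n-j) p`, and `S(j, k) = 0` for `j < k`, so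
every term has valuation `≥ (k-j) p ≥ 0` because `p < 0`. The coefficient of `X^n` is `c_n = 1`.
-/

section StirlingExpansion

variable {R A : Type*} [CommSemiring R] [Semiring A] [Algebra R A]

theorem stirlingSecond_mul_pow_succ_succ (μ : R) (j k : ℕ) :
    (Nat.stirlingSecond (j + 1) (k + 1) : R) * μ ^ (j + 1 - (k + 1)) =
      Nat.stirlingSecond j k * μ ^ (j - k) +
        (k + 1) * μ * (Nat.stirlingSecond j (k + 1) * μ ^ (j - (k + 1))) := by
  rcases lt_or_ge k j with hkj | hjk
  · obtain ⟨l, rfl⟩ := Nat.exists_eq_add_of_lt hkj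
    rw [Nat.stirlingSecond_succ_succ, show k + l + 1 + 1 - (k + 1) = l + 1 by omega,
      show k + l + 1 - k = l + 1 by omega, show k + l + 1 - (k + 1) = l by omega]
    push_cast
    ring
  · rw [Nat.stirlingSecond_succ_succ, Nat.stirlingSecond_eq_zero_of_lt (by omega : j < k + 1),
      show j + 1 - (k + 1) = j - k by omega]
    push_cast
    ring

variable {D u v : A} {μ : R}

theorem mul_pow_eq_pow_mul_add (hD : D * u = u * D + μ • u) (k : ℕ) :
    D * u ^ k = u ^ k * D + (k * μ) • u ^ k := by
  induction k with
  | zero => simp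
  | succ k ih =>
    rw [pow_succ, ← mul_assoc, ih, add_mul, mul_assoc, hD, smul_mul_assoc, mul_add,
      mul_smul_comm, ← mul_assoc, add_assoc, ← add_smul, add_comm μ, Nat.cast_succ,
      add_one_mul]

theorem mul_pow_mul_mul_pow (huv : u * v = 1) (hD : D * u = u * D + μ • u) (k : ℕ) :
    D * (u ^ k * (v * D) ^ k) =
      u ^ (k + 1) * (v * D) ^ (k + 1) + (k * μ) • (u ^ k * (v * D) ^ k) := by
  rw [← mul_assoc, mul_pow_eq_pow_mul_add hD, add_mul, smul_mul_assoc, pow_succ, pow_succ',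
    mul_assoc, mul_assoc, ← mul_assoc u, ← mul_assoc u, huv, one_mul]

theorem pow_eq_sum_stirlingSecond (huv : u * v = 1) (hD : D * u = u * D + μ • u) (j : ℕ) :
    D ^ j = ∑ k ∈ Finset.range (j + 1),
      ((Nat.stirlingSecond j k : R) * μ ^ (j - k)) • (u ^ k * (v * D) ^ k) := by
  induction j with
  | zero => simp
  | succ j ih =>
    let a : ℕ → ℕ → R := fun j k => (Nat.stirlingSecond j k : R) * μ ^ (j - k)
    let Q : ℕ → A := fun k => u ^ k * (v * D) ^ k
    have hshift : ∑ k ∈ Finset.range (j + 1), (a j k * (k * μ)) • Q k =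
        ∑ k ∈ Finset.range (j + 1), ((k + 1) * μ * a j (k + 1)) • Q (k + 1) := by
      calc ∑ k ∈ Finset.range (j + 1), (a j k * (k * μ)) • Q k
          = ∑ k ∈ Finset.range (j + 2), (a j k * (k * μ)) • Q k := by
            simp [Finset.sum_range_succ _ (j + 1), a, Nat.stirlingSecond_eq_zero_of_lt]
        _ = ∑ k ∈ Finset.range (j + 1), ((k + 1) * μ * a j (k + 1)) • Q (k + 1) := by
            rw [Finset.sum_range_succ']
            simp only [Nat.cast_zero, zero_mul, mul_zero, zero_smul, add_zero, Nat.cast_succ]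
            refine Finset.sum_congr rfl fun k _ => ?_
            rw [mul_comm]
    calc D ^ (j + 1)
        = ∑ k ∈ Finset.range (j + 1), (a j k • Q (k + 1) + (a j k * (k * μ)) • Q k) := by
          rw [pow_succ', ih, Finset.mul_sum]
          refine Finset.sum_congr rfl fun k _ => ?_
          rw [mul_smul_comm, mul_pow_mul_mul_pow huv hD, smul_add, smul_smul]
      _ = ∑ k ∈ Finset.range (j + 1), a (j + 1) (k + 1) • Q (k + 1) := by
          rw [Finset.sum_add_distrib, hshift, ← Finset.sum_add_distrib]
          refine Finset.sum_congr rfl fun k _ => ?_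
          rw [← add_smul]
          exact congrArg (· • Q (k + 1)) (stirlingSecond_mul_pow_succ_succ μ j k).symm
      _ = ∑ k ∈ Finset.range (j + 2), a (j + 1) k • Q k := by
          rw [Finset.sum_range_succ' _ (j + 1)]
          simp [a]

theorem sum_mul_pow_eq_sum_stirlingSecond (huv : u * v = 1) (hD : D * u = u * D + μ • u)
    (c : ℕ → A) (n : ℕ) :
    ∑ j ∈ Finset.range (n + 1), c j * D ^ j =
      ∑ k ∈ Finset.range (n + 1), (∑ j ∈ Finset.range (n + 1),
        ((Nat.stirlingSecond j k : R) * μ ^ (j - k)) • (c j * u ^ k)) * (v * D) ^ k := by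
  simp only [Finset.sum_mul, smul_mul_assoc, mul_assoc]
  rw [Finset.sum_comm]
  refine Finset.sum_congr rfl fun j hj => ?_
  have hjn : j + 1 ≤ n + 1 := Finset.mem_range.mp hj
  rw [pow_eq_sum_stirlingSecond huv hD, Finset.mul_sum]
  simp only [mul_smul_comm]
  refine Finset.sum_subset (Finset.range_subset_range.mpr hjn) fun k _ hk => ?_
  rw [Nat.stirlingSecond_eq_zero_of_lt (by simpa using hk)]
  simp

end StirlingExpansion

theorem mulOp_apply (a f : K) : mulOp a f = a * f := rfl

theorem coeff_ddE (f : K) (d : ℤ) : (ddE f).coeff d = d * f.coeff d := rfl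

def mulOpRingHom : K →+* Module.End ℂ K where
  toFun := mulOp
  map_one' := LinearMap.ext (one_mul (M := K))
  map_mul' a b := LinearMap.ext (mul_assoc a b)
  map_zero' := LinearMap.ext (zero_mul (M₀ := K))
  map_add' a b := LinearMap.ext (add_mul a b)

theorem mulOp_eq_mulOpRingHom (a : K) : mulOp a = mulOpRingHom a := rfl

theorem mulOp_smul (z : ℂ) (a : K) : mulOp (z • a) = z • mulOp a :=
  LinearMap.ext fun f => by
    simp only [mulOp_apply, LinearMap.smul_apply, ← HahnSeries.single_zero_mul_eq_smul, mul_assoc]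

theorem tpow_zero : tpow 0 = 1 := HahnSeries.single_zero_one

theorem tpow_mul_tpow (a b : ℤ) : tpow a * tpow b = tpow (a + b) := by
  simp [tpow, HahnSeries.single_mul_single]

theorem tpow_pow (a : ℤ) (k : ℕ) : tpow a ^ k = tpow (k * a) := by
  simp [tpow, HahnSeries.single_pow]

theorem coeff_tpow_mul (m : ℤ) (f : K) (d : ℤ) : (tpow m * f).coeff d = f.coeff (d - m) := by
  simpa [tpow] using
    HahnSeries.coeff_single_mul_add (r := (1 : ℂ)) (x := f) (a := d - m) (b := m)

theorem ddE_mul_mulOp_tpow (m : ℤ) :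
    ddE * mulOp (tpow m) = mulOp (tpow m) * ddE + (m : ℂ) • mulOp (tpow m) := by
  ext f d
  simp only [Module.End.mul_apply, LinearMap.add_apply, LinearMap.smul_apply, mulOp_apply,
    coeff_ddE, HahnSeries.coeff_add, HahnSeries.coeff_smul, coeff_tpow_mul, smul_eq_mul]
  push_cast
  ring

theorem mulOp_tpow_mul_sum_eq_sum (c : ℕ → K) (n : ℕ) (p : ℤ) (q : ℕ) :
    mulOp (tpow (-((n : ℤ) * p))) *
        ∑ j ∈ Finset.range (n + 1), mulOp (c j) * ((q : ℂ)⁻¹ • ddE) ^ j =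
      ∑ k ∈ Finset.range (n + 1), mulOp (∑ j ∈ Finset.range (n + 1),
        ((Nat.stirlingSecond j k : ℂ) * ((p : ℂ) / q) ^ (j - k)) •
          (tpow ((k : ℤ) * p - (n : ℤ) * p) * c j)) *
        (mulOp (tpow (-p)) * ((q : ℂ)⁻¹ • ddE)) ^ k := by
  have huv : mulOp (tpow p) * mulOp (tpow (-p)) = 1 := by
    rw [mulOp_eq_mulOpRingHom, mulOp_eq_mulOpRingHom, ← map_mul, tpow_mul_tpow, add_neg_cancel]
    exact map_one _
  have hD : ((q : ℂ)⁻¹ • ddE) * mulOp (tpow p) =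
      mulOp (tpow p) * ((q : ℂ)⁻¹ • ddE) + ((p : ℂ) / q) • mulOp (tpow p) := by
    rw [smul_mul_assoc, ddE_mul_mulOp_tpow, smul_add, mul_smul_comm, smul_smul, inv_mul_eq_div]
  rw [sum_mul_pow_eq_sum_stirlingSecond huv hD, Finset.mul_sum]
  refine Finset.sum_congr rfl fun k _ => ?_
  rw [← mul_assoc, Finset.mul_sum]
  congr 1
  simp only [mulOp_eq_mulOpRingHom, map_sum, ← map_pow, ← map_mul, mul_smul_comm]
  refine Finset.sum_congr rfl fun j _ => ?_
  rw [← mulOp_eq_mulOpRingHom, ← mulOp_eq_mulOpRingHom, mulOp_smul, tpow_pow, mul_comm (c j),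
    ← mul_assoc, tpow_mul_tpow, neg_add_eq_sub]

theorem exists_ofPS_eq_of_coeff_neg {x : K} (hx : ∀ d < 0, x.coeff d = 0) :
    ∃ f : PowerSeries ℂ, ofPS f = x := by
  rcases eq_or_ne x 0 with rfl | hx0
  · exact ⟨0, map_zero _⟩
  have hord : 0 ≤ x.order := (HahnSeries.le_order_iff_forall hx0).mpr hx
  exact ⟨_, LaurentSeries.X_order_mul_powerSeriesPart (Int.toNat_of_nonneg hord)⟩

theorem coeff_embHom_mul {q : ℕ} (hq : 0 < q) (x : K) (i : ℤ) :
    (embHom q hq x).coeff (q * i) = x.coeff i :=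
  HahnSeries.embDomain_coeff

theorem exists_eq_mul_of_embHom_coeff_ne_zero {q : ℕ} (hq : 0 < q) {x : K} {d : ℤ}
    (h : (embHom q hq x).coeff d ≠ 0) : ∃ i : ℤ, d = q * i ∧ x.coeff i ≠ 0 := by
  by_cases hd : ∃ i : ℤ, (q : ℤ) * i = d
  · obtain ⟨i, rfl⟩ := hd
    exact ⟨i, rfl, by rwa [coeff_embHom_mul] at h⟩
  · exact absurd (HahnSeries.embDomain_of_notMem_range fun ⟨i, hi⟩ => hd ⟨i, hi⟩) h

theorem coeff_tpow_mul_embHom_eq_zero {q : ℕ} (hq : 0 < q) {m : ℤ} {x : K}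
    (h : 0 ≤ m + q * x.order) {d : ℤ} (hd : d < 0) : (tpow m * embHom q hq x).coeff d = 0 := by
  rw [coeff_tpow_mul]
  by_contra hne
  obtain ⟨i, hi, hxi⟩ := exists_eq_mul_of_embHom_coeff_ne_zero hq hne
  have : (q : ℤ) * x.order ≤ q * i :=
    mul_le_mul_of_nonneg_left (HahnSeries.order_le_of_coeff_ne_zero hxi) (by positivity)
  omega

theorem sub_mul_le_mul_order {n : ℕ} {c : ℕ → K} (hmonic : c n = 1) {p : ℤ} {q : ℕ}
    (hmin : ∀ i, 1 ≤ i → i ≤ n → c (n - i) ≠ 0 →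
      (p : ℚ) / (q : ℚ) ≤ ((c (n - i)).order : ℚ) / (i : ℚ))
    (hq : 0 < q) {j : ℕ} (hj : j ≤ n) (hcj : c j ≠ 0) :
    ((n : ℤ) - j) * p ≤ q * (c j).order := by
  rcases hj.eq_or_lt with rfl | hjn
  · simp [hmonic]
  have hslope := hmin (n - j) (by omega) (by omega) (by rwa [Nat.sub_sub_self hj])
  rw [Nat.sub_sub_self hj, div_le_div_iff₀ (by positivity) (by simpa using hjn),
    Nat.cast_sub hj] at hslope
  exact_mod_cast (by linarith : ((n - j : ℚ)) * p ≤ q * (c j).order)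

theorem exists_ofPS_eq_sum_smul_tpow_mul_embHom {n : ℕ} {c : ℕ → K} {p : ℤ} {q : ℕ}
    (hq : 0 < q) (hp : p ≤ 0)
    (hord : ∀ j ≤ n, c j ≠ 0 → ((n : ℤ) - j) * p ≤ q * (c j).order)
    (α : ℕ → ℕ → ℂ) (hα : ∀ j k, j < k → α j k = 0) (k : ℕ) :
    ∃ f : PowerSeries ℂ, ofPS f = ∑ j ∈ Finset.range (n + 1),
      α j k • (tpow ((k : ℤ) * p - (n : ℤ) * p) * embHom q hq (c j)) := by
  refine exists_ofPS_eq_of_coeff_neg fun d hd => ?_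
  rw [HahnSeries.coeff_sum]
  refine Finset.sum_eq_zero fun j hj => ?_
  rcases lt_or_ge j k with hjk | hkj
  · simp [hα j k hjk]
  rcases eq_or_ne (c j) 0 with hcj | hcj
  · simp [hcj]
  have hjn : j ≤ n := Nat.lt_succ_iff.mp (Finset.mem_range.mp hj)
  have : ((j : ℤ) - k) * p ≤ 0 := mul_nonpos_of_nonneg_of_nonpos (by omega) hp
  rw [HahnSeries.coeff_smul, coeff_tpow_mul_embHom_eq_zero hq (by linarith [hord j hjn hcj]) hd,
    smul_zero]

-- `x` acts on `ℂ((s))` as `t d/dt = (1/q) s d/ds` and `X` as `s^(-p) (1/q) s d/ds`.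
theorem stmt_8_general (n : ℕ) (c : ℕ → K) (hmonic : c n = 1)
    (p : ℤ) (q : ℕ) (hq : 0 < q)
    (hneg : (p : ℚ) / (q : ℚ) < 0)
    (hmin : ∀ i, 1 ≤ i → i ≤ n → c (n - i) ≠ 0 →
      (p : ℚ) / (q : ℚ) ≤ ((c (n - i)).order : ℚ) / (i : ℚ)) :
    ∃ b : ℕ → PowerSeries ℂ, b n = 1 ∧
      mulOp (tpow (-((n : ℤ) * p))) *
          (∑ j ∈ Finset.range (n + 1), mulOp (embHom q hq (c j)) * ((q : ℂ)⁻¹ • ddE) ^ j) =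
        ∑ j ∈ Finset.range (n + 1),
          mulOp (ofPS (b j)) * (mulOp (tpow (-p)) * ((q : ℂ)⁻¹ • ddE)) ^ j := by
  have hp : p ≤ 0 := by
    by_contra! hp
    exact hneg.not_ge (div_nonneg (by exact_mod_cast hp.le) q.cast_nonneg)
  choose b hb using exists_ofPS_eq_sum_smul_tpow_mul_embHom hq hp
    (fun j hj hcj => sub_mul_le_mul_order hmonic hmin hq hj hcj)
    (fun j k => (Nat.stirlingSecond j k : ℂ) * ((p : ℂ) / q) ^ (j - k))
    (fun j k hjk => by simp [Nat.stirlingSecond_eq_zero_of_lt hjk])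
  refine ⟨b, HahnSeries.ofPowerSeries_injective (Γ := ℤ) ?_, ?_⟩
  · change ofPS (b n) = ofPS 1
    rw [hb, Finset.sum_eq_single_of_mem n (Finset.self_mem_range_succ n) fun j hj hjn => ?_]
    · simp [Nat.stirlingSecond_self, hmonic, tpow_zero]
    · have hjn : j < n := lt_of_le_of_ne (Finset.mem_range_succ_iff.mp hj) hjn
      rw [Nat.stirlingSecond_eq_zero_of_lt hjn, Nat.cast_zero, zero_mul]
      exact zero_smul ℂ (tpow _ * embHom q hq (c j))
  · simp only [mulOp_tpow_mul_sum_eq_sum, hb]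

/-- Change of variables: for monic `f = Σ_{i} a_i x^(n-i) ∈ K{x, δ₁}` with
`r = min v(a_i)/i = p/q < 0` in lowest terms, after base change `t = s^q` and the
substitution `x = s^p X`, the polynomial `g(X) = s^(-np) f(s^p X)` is monic of degree `n`
with coefficients in `ℂ[[s]]`, for the derivation `(1/q) s^(1-p) d/ds`.  Here the original
`x` acts on `ℂ((s))` as `t d/dt = (1/q) s d/ds` and the new variable `X` as
`s^(-p) ⬝ (1/q) s d/ds = (1/q) s^(1-p) d/ds`. -/
theorem stmt_8 (n : ℕ) (hn : 1 ≤ n) (c : ℕ → K) (hmonic : c n = 1)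
    (p : ℤ) (q : ℕ) (hq : 0 < q) (hcop : Int.gcd p (q : ℤ) = 1)
    (hneg : (p : ℚ) / (q : ℚ) < 0)
    (hmin : ∀ i, 1 ≤ i → i ≤ n → c (n - i) ≠ 0 →
      (p : ℚ) / (q : ℚ) ≤ ((c (n - i)).order : ℚ) / (i : ℚ))
    (hattain : ∃ i, 1 ≤ i ∧ i ≤ n ∧ c (n - i) ≠ 0 ∧
      (p : ℚ) / (q : ℚ) = ((c (n - i)).order : ℚ) / (i : ℚ)) :
    ∃ b : ℕ → PowerSeries ℂ, b n = 1 ∧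
      mulOp (tpow (-((n : ℤ) * p))) *
          (∑ j ∈ Finset.range (n + 1), mulOp (embHom q hq (c j)) * ((q : ℂ)⁻¹ • ddE) ^ j) =
        ∑ j ∈ Finset.range (n + 1),
          mulOp (ofPS (b j)) * (mulOp (tpow (-p)) * ((q : ℂ)⁻¹ • ddE)) ^ j :=
  stmt_8_general n c hmonic p q hq hneg hmin
end
end
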